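/- Let W > 0, 0 < T_s < 1/(2W) and K ≥ 1, and set p_K(z) = z^K · T_K^{[2cos(2πWT_s), 2]}(z + z⁻¹). Then the maximum of |p_K(e^{-2πifT_s})| over f ∈ [-W, W] equals 2 · ((2 − 2cos(2πWT_s))/4)^K. -/

import Mathlib

open MeasureTheory Real

/-- The shifted Chebyshev polynomial `T_K^{[a,b]}(y) = 2((b-a)/4)^K T_K(2(y-a)/(b-a) - 1)`,
evaluated at a complex point `y`. -/
noncomputable def chebShiftC (K : ℕ) (a b : ℝ) (y : ℂ) : ℂ :=
  2 * (((b : ℂ) - (a : ℂ)) / 4) ^ K *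
    (Polynomial.Chebyshev.T ℂ (K : ℤ)).eval (2 / ((b : ℂ) - (a : ℂ)) * (y - (a : ℂ)) - 1)

/-- The Laurent-polynomial expression `p_K(z) = z^K ⬝ T_K^{[a,2]}(z + z⁻¹)`. -/
noncomputable def pKfun (K : ℕ) (a : ℝ) (z : ℂ) : ℂ := z ^ K * chebShiftC K a 2 (z + z⁻¹)

/-! On the unit circle `|z^K| = 1` and `z + z⁻¹ = 2 Re z`, so
`|p_K(e^{-iθ})| = |T_K^{[a,2]}(2 cos θ)|`.
For `|f| ≤ W` the point `2 cos(2πfTs)` lies in `[a, 2]` with `a = 2 cos(2πWTs)`, which the affine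
change of variables maps onto `[-1, 1]`, where `|T_K| ≤ 1`; the bound is attained at `f = 0`
because `T_K(1) = 1`. -/

open Polynomial.Chebyshev

theorem chebShiftC_ofReal (K : ℕ) (a b y : ℝ) :
    chebShiftC K a b y =
      ((2 * ((b - a) / 4) ^ K * (T ℝ K).eval (2 / (b - a) * (y - a) - 1) : ℝ) : ℂ) := by
  rw [chebShiftC]
  push_cast [complex_ofReal_eval_T]
  rfl

theorem norm_chebShiftC_le (K : ℕ) {a b y : ℝ} (hab : a < b) (hy : y ∈ Set.Icc a b) :
    ‖chebShiftC K a b y‖ ≤ 2 * ((b - a) / 4) ^ K := by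
  have hba : 0 < b - a := sub_pos.mpr hab
  have hx : |2 / (b - a) * (y - a) - 1| ≤ 1 := by
    rw [abs_le, div_mul_eq_mul_div, le_sub_iff_add_le, sub_le_iff_le_add, le_div_iff₀ hba,
      div_le_iff₀ hba]
    constructor <;> nlinarith [hy.1, hy.2]
  rw [chebShiftC_ofReal, Complex.norm_real, norm_mul, norm_of_nonneg (by positivity)]
  exact mul_le_of_le_one_right (by positivity) (abs_eval_T_real_le_one _ hx)

theorem chebShiftC_right (K : ℕ) {a b : ℝ} (hab : a ≠ b) :
    chebShiftC K a b b = ((2 * ((b - a) / 4) ^ K : ℝ) : ℂ) := by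
  rw [chebShiftC_ofReal, div_mul_cancel₀ _ (sub_ne_zero.mpr hab.symm),
    show (2 : ℝ) - 1 = 1 by norm_num, T_eval_one, mul_one]

theorem add_inv_eq_two_mul_re_of_norm_eq_one {z : ℂ} (hz : ‖z‖ = 1) :
    z + z⁻¹ = (2 * z.re : ℝ) := by
  rw [Complex.inv_def, Complex.normSq_eq_norm_sq, hz, one_pow, inv_one, Complex.ofReal_one,
    mul_one, Complex.add_conj]

theorem norm_pKfun_of_norm_eq_one (K : ℕ) (a : ℝ) {z : ℂ} (hz : ‖z‖ = 1) :
    ‖pKfun K a z‖ = ‖chebShiftC K a 2 (2 * z.re : ℝ)‖ := by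
  rw [pKfun, norm_mul, norm_pow, hz, one_pow, one_mul, add_inv_eq_two_mul_re_of_norm_eq_one hz]

theorem norm_pKfun_exp_neg_mul_I (K : ℕ) (a t : ℝ) :
    ‖pKfun K a (Complex.exp (-(t * Complex.I)))‖ = ‖chebShiftC K a 2 (2 * cos t : ℝ)‖ := by
  rw [← neg_mul, ← Complex.ofReal_neg,
    norm_pKfun_of_norm_eq_one _ _ (Complex.norm_exp_ofReal_mul_I _), Complex.exp_ofReal_mul_I_re,
    cos_neg]

theorem cos_le_cos_of_abs_le_of_le_pi {θ α : ℝ} (hθ : |θ| ≤ α) (hα : α ≤ π) : cos α ≤ cos θ := by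
  simpa only [cos_abs] using cos_le_cos_of_nonneg_of_le_pi (abs_nonneg θ) hα hθ

theorem max_abs_pK_on_band_general
    (W Ts : ℝ) (hW : 0 < W) (hTs : 0 < Ts) (hNyq : Ts < 1 / (2 * W)) (K : ℕ) :
    IsGreatest
      ((fun f : ℝ =>
          ‖pKfun K (2 * Real.cos (2 * Real.pi * W * Ts))
              (Complex.exp (-(2 * Real.pi * Complex.I * f * Ts)))‖) '' Set.Icc (-W) W)
      (2 * ((2 - 2 * Real.cos (2 * Real.pi * W * Ts)) / 4) ^ K) := by
  set α := 2 * π * W * Ts with hα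
  have hα0 : 0 < α := by positivity
  have hαπ : α < π := by
    rw [lt_div_iff₀ (by positivity)] at hNyq; nlinarith [pi_pos]
  have ha : 2 * cos α < 2 := by
    nlinarith [cos_lt_cos_of_nonneg_of_le_pi le_rfl hαπ.le hα0, cos_zero]
  have hnorm (f : ℝ) : ‖pKfun K (2 * cos α) (Complex.exp (-(2 * π * Complex.I * f * Ts)))‖
      = ‖chebShiftC K (2 * cos α) 2 (2 * cos (2 * π * f * Ts) : ℝ)‖ := by
    rw [← norm_pKfun_exp_neg_mul_I]
    push_cast
    ring_nf
  refine ⟨⟨0, ⟨by linarith, hW.le⟩, ?_⟩, ?_⟩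
  · simp only [hnorm, mul_zero, zero_mul, cos_zero, mul_one]
    have : 0 ≤ 2 - 2 * cos α := by linarith
    rw [chebShiftC_right K ha.ne, Complex.norm_real, norm_of_nonneg (by positivity)]
  · rintro _ ⟨f, hf, rfl⟩
    dsimp only
    rw [hnorm]
    refine norm_chebShiftC_le K ha ⟨?_, by linarith [cos_le_one (2 * π * f * Ts)]⟩
    have hf' : |2 * π * f * Ts| ≤ α := by
      rw [abs_mul, abs_mul, abs_of_pos hTs, abs_of_pos (by positivity : (0:ℝ) < 2 * π), hα]
      gcongr
      exact abs_le.mpr hf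
    linarith [cos_le_cos_of_abs_le_of_le_pi hf' hαπ.le]

/-- The maximum of `|p_K(e^{-2πifTs})|` over `f ∈ [-W, W]` equals
`2 ((2 - 2cos(2πWTs))/4)^K`. -/
theorem max_abs_pK_on_band
    (W Ts : ℝ) (hW : 0 < W) (hTs : 0 < Ts) (hNyq : Ts < 1 / (2 * W)) (K : ℕ) (hK : 1 ≤ K) :
    IsGreatest
      ((fun f : ℝ =>
          ‖pKfun K (2 * Real.cos (2 * Real.pi * W * Ts))
              (Complex.exp (-(2 * Real.pi * Complex.I * f * Ts)))‖) '' Set.Icc (-W) W)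
      (2 * ((2 - 2 * Real.cos (2 * Real.pi * W * Ts)) / 4) ^ K) :=
  max_abs_pK_on_band_general W Ts hW hTs hNyq K
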